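/- arXiv:1201.0597 — 5 statements merged into one kernel-verified Lean document; each statement's English description precedes it below -/
import Mathlib

section
/- Let t be a finite binary tree and φ a set of triples (x,y₁,y₂) of nodes of t such that every triple in φ satisfies: x = gca(y₁,y₂), y₁ lies in the left subtree of x, and y₂ lies in the right subtree of x (the 'trivial arrangement'). Let X be any set of nodes each of which occurs as the first component of some triple in φ. Then there exists a function w mapping each x ∈ X to either y₁ or y₂ for some triple (x,y₁,y₂) ∈ φ, such that w is induced by a 2-color guidance system. In fact, one can choose the guidance system so that no tree edge is traversed by two guides. -/
/-- Longest common prefix of two nodes (nodes of the infinite binary tree are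
lists of booleans, read as root-to-node paths); this is the greatest common
ancestor. -/
def lcp : List Bool → List Bool → List Bool
  | a :: as, b :: bs => if a = b then a :: lcp as bs else []
  | _, _ => []

/-- `w` lies on the (unique shortest) path between nodes `u` and `v`. -/
def onPath (u v w : List Bool) : Prop :=
  lcp u v <+: w ∧ (w <+: u ∨ w <+: v)

/-- A guide in a binary tree: a nonempty set of sources and one target. -/
structure BGuide where
  sources : Set (List Bool)
  nonempty : sources.Nonempty
  target : List Bool

/-- Node support of a guide: all nodes on paths from sources to the target. -/
def BGuide.support (π : BGuide) : Set (List Bool) :=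
  {w | ∃ s ∈ π.sources, onPath s π.target w}

/-- Edge support of a guide: edges are identified with their lower endpoint;
an edge is traversed when both of its endpoints are on a source-target path. -/
def BGuide.edgeSupport (π : BGuide) : Set (List Bool) :=
  {c | c ≠ [] ∧ ∃ s ∈ π.sources, onPath s π.target c ∧ onPath s π.target c.dropLast}

/-- Two guides conflict if their supports intersect. -/
def BConflict (π π' : BGuide) : Prop := (π.support ∩ π'.support).Nonempty

/- ===== auxiliary material ===== -/

theorem lcp_of_prefix : ∀ {s t : List Bool}, s <+: t → lcp s t = s := by
  intro s
  induction s with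
  | nil => intro t _; cases t <;> rfl
  | cons a as ih =>
    intro t h
    obtain ⟨r, rfl⟩ := h
    simp [lcp, ih (List.prefix_append as r)]

theorem incompatBr {x v : List Bool} (h1 : (x ++ [false]) <+: v)
    (h2 : (x ++ [true]) <+: v) : False := by
  obtain ⟨r, hr⟩ := h1
  obtain ⟨s, hs⟩ := h2
  have h : x ++ ([false] ++ r) = x ++ ([true] ++ s) := by
    rw [← List.append_assoc, ← List.append_assoc, hr, hs]
  have := List.append_cancel_left h
  simp at this

open Classical in
/-- The chosen target: pick the right target `Y2 x` iff some strict ancestor's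
already-chosen path passes below `x` on the left side. -/
noncomputable def wFun (X : Set (List Bool)) (Y1 Y2 : List Bool → List Bool)
    (x : List Bool) : List Bool :=
  if (∃ n : Fin x.length, x.take ↑n ∈ X ∧ (x ++ [false]) <+: wFun X Y1 Y2 (x.take ↑n))
  then Y2 x else Y1 x
termination_by x.length
decreasing_by all_goals (simp only [List.length_take]; omega)

open Classical in
/-- Rank of a node: 1 + rank of the unique `X`-ancestor whose path contains it. -/
noncomputable def rankFun (X : Set (List Bool)) (W : List Bool → List Bool)
    (x : List Bool) : ℕ :=
  if h : (∃ n : Fin x.length, x.take ↑n ∈ X ∧ x <+: W (x.take ↑n))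
  then rankFun X W (x.take ↑h.choose) + 1 else 0
termination_by x.length
decreasing_by all_goals (simp only [List.length_take]; omega)

/-- The singleton-source guide from `x` to `t`. -/
def mkGuide (x t : List Bool) : BGuide :=
  ⟨{x}, Set.singleton_nonempty x, t⟩

theorem mkGuide_sources (x t : List Bool) : (mkGuide x t).sources = {x} := rfl

theorem mkGuide_target (x t : List Bool) : (mkGuide x t).target = t := rfl

theorem mkGuide_some (x t : List Bool) : (mkGuide x t).nonempty.some = x :=
  Set.mem_singleton_iff.mp (Set.Nonempty.some_mem _)

theorem mkGuide_inj {x t x' t' : List Bool} (h : mkGuide x t = mkGuide x' t') :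
    x = x' := by
  have := congrArg BGuide.sources h
  rw [mkGuide_sources, mkGuide_sources] at this
  exact Set.singleton_eq_singleton_iff.mp this

theorem mkGuide_mem_support {x t z : List Bool} :
    z ∈ (mkGuide x t).support ↔ onPath x t z := by
  simp [BGuide.support, mkGuide]

theorem mkGuide_mem_edgeSupport {x t z : List Bool} :
    z ∈ (mkGuide x t).edgeSupport ↔
      z ≠ [] ∧ onPath x t z ∧ onPath x t z.dropLast := by
  simp [BGuide.edgeSupport, mkGuide]

/-- For any set `φ` of triples in the trivial arrangement
(`x = gca(y₁,y₂)`, `y₁` in the left subtree and `y₂` in the right subtree of `x`)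
and any set `X` of nodes having witnesses, there is a witness function on `X`
induced by a 2-color guidance system, and moreover no tree edge is traversed by
two distinct guides. -/
theorem stmt1 (T : Set (List Bool)) (hfin : T.Finite)
    (hpre : ∀ x ∈ T, ∀ y : List Bool, y <+: x → y ∈ T)
    (φ : Set (List Bool × List Bool × List Bool))
    (hsub : ∀ p ∈ φ, p.1 ∈ T ∧ p.2.1 ∈ T ∧ p.2.2 ∈ T)
    (htriv : ∀ p ∈ φ, p.1 = lcp p.2.1 p.2.2 ∧
      (p.1 ++ [false]) <+: p.2.1 ∧ (p.1 ++ [true]) <+: p.2.2)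
    (X : Set (List Bool)) (hX : ∀ x ∈ X, ∃ y₁ y₂, (x, y₁, y₂) ∈ φ) :
    ∃ (w : List Bool → List Bool) (GS : Set BGuide) (c : BGuide → Fin 2),
      (∀ x ∈ X, ∃ y₁ y₂, (x, y₁, y₂) ∈ φ ∧ (w x = y₁ ∨ w x = y₂)) ∧
      (∀ x ∈ X, ∃ π ∈ GS, x ∈ π.sources ∧ π.target = w x) ∧
      (∀ π ∈ GS, ∀ π' ∈ GS, π ≠ π' → BConflict π π' → c π ≠ c π') ∧
      (∀ π ∈ GS, ∀ π' ∈ GS, π ≠ π' → Disjoint π.edgeSupport π'.edgeSupport) := by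
  classical
  -- choose witnesses
  have h1 : ∀ x : List Bool, ∃ y₁ y₂, x ∈ X → (x, y₁, y₂) ∈ φ := by
    intro x
    by_cases h : x ∈ X
    · obtain ⟨y₁, y₂, hm⟩ := hX x h
      exact ⟨y₁, y₂, fun _ => hm⟩
    · exact ⟨[], [], fun hx => absurd hx h⟩
  choose Y1 Y2 hY using h1
  set W := wFun X Y1 Y2 with hWdef
  -- the basic dichotomy
  have hsplit : ∀ x ∈ X,
      ((x ++ [false]) <+: W x ∧ (W x = Y1 x)) ∨ ((x ++ [true]) <+: W x ∧ (W x = Y2 x)) := by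
    intro x hx
    rw [hWdef, wFun]
    split_ifs with h
    · exact Or.inr ⟨(htriv _ (hY x hx)).2.2, rfl⟩
    · exact Or.inl ⟨(htriv _ (hY x hx)).2.1, rfl⟩
  have hcondPos : ∀ x ∈ X,
      (∃ n : Fin x.length, x.take ↑n ∈ X ∧ (x ++ [false]) <+: W (x.take ↑n)) →
      (x ++ [true]) <+: W x := by
    intro x hx h
    rw [hWdef] at h ⊢
    rw [wFun, if_pos h]
    exact (htriv _ (hY x hx)).2.2
  have hcondNeg : ∀ x ∈ X,
      ¬ (∃ n : Fin x.length, x.take ↑n ∈ X ∧ (x ++ [false]) <+: W (x.take ↑n)) →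
      (x ++ [false]) <+: W x := by
    intro x hx h
    rw [hWdef] at h ⊢
    rw [wFun, if_neg h]
    exact (htriv _ (hY x hx)).2.1
  have hpW : ∀ x ∈ X, x <+: W x ∧ x.length < (W x).length := by
    intro x hx
    rcases hsplit x hx with ⟨h, _⟩ | ⟨h, _⟩ <;>
      exact ⟨(List.prefix_append x _).trans h,
        by have := h.length_le; simp [List.length_append] at this; omega⟩
  -- no two paths share an edge (ordered version, induction on bound of c.length)
  have edisj : ∀ n (c a a' : List Bool), c.length ≤ n → a ∈ X → a' ∈ X →
      a.length < a'.length → a <+: c → c <+: W a →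
      a' <+: c → a'.length < c.length → c <+: W a' → False := by
    intro n
    induction n with
    | zero => intro c a a' hc _ _ h1 _ _ _ h2 _; omega
    | succ n ih =>
      intro c a a' hc haX ha'X hlen hac hcWa ha'c ha'lt hcWa'
      have haa' : a <+: a' := by
        rcases List.prefix_or_prefix_of_prefix hac ha'c with h | h
        · exact h
        · exfalso; have := h.length_le; omega
      obtain ⟨r, hr⟩ := ha'c
      cases r with
      | nil => simp at hr; subst hr; omega
      | cons b r' =>
        have hb : (a' ++ [b]) <+: c := ⟨r', by simpa using hr⟩
        have hbWa : (a' ++ [b]) <+: W a := hb.trans hcWa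
        have htake : a'.take a.length = a := (List.prefix_iff_eq_take.mp haa').symm
        cases b with
        | false =>
          -- then a' would have chosen the right side, but its path goes left
          have hcond : ∃ n : Fin a'.length, a'.take ↑n ∈ X ∧
              (a' ++ [false]) <+: W (a'.take ↑n) := by
            refine ⟨⟨a.length, hlen⟩, ?_⟩
            show a'.take a.length ∈ X ∧ (a' ++ [false]) <+: W (a'.take a.length)
            rw [htake]
            exact ⟨haX, hbWa⟩
          exact incompatBr (hb.trans hcWa') (hcondPos a' ha'X hcond)
        | true =>
          -- some ancestor a₀ forced a' to go right; a₀'s and a's paths share edge a'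
          have hbWa' : (a' ++ [true]) <+: W a' := hb.trans hcWa'
          have hcond : ∃ n : Fin a'.length, a'.take ↑n ∈ X ∧
              (a' ++ [false]) <+: W (a'.take ↑n) := by
            by_contra hnc
            exact incompatBr (hcondNeg a' ha'X hnc) hbWa'
          obtain ⟨m, hmX, hmW⟩ := hcond
          set a₀ := a'.take ↑m with ha₀def
          have ha₀pre : a₀ <+: a' := List.take_prefix _ _
          have ha₀len : a₀.length < a'.length := by
            rw [ha₀def]; simp only [List.length_take]; omega
          have ha'Wa₀ : a' <+: W a₀ := (List.prefix_append a' [false]).trans hmW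
          have ha'Wa : a' <+: W a := (List.prefix_append a' [true]).trans hbWa
          have hne : a ≠ a₀ := by
            intro h
            exact incompatBr hmW (h ▸ hbWa)
          have hlen' : a.length ≠ a₀.length := by
            intro h
            rcases List.prefix_or_prefix_of_prefix haa' ha₀pre with hp | hp
            · exact hne (hp.eq_of_length h)
            · exact hne (hp.eq_of_length h.symm).symm
          have hbound : a'.length ≤ n := by omega
          rcases lt_or_gt_of_ne hlen' with hlt | hlt
          · exact ih a' a a₀ hbound haX hmX hlt haa' ha'Wa ha₀pre ha₀len ha'Wa₀
          · exact ih a' a₀ a hbound hmX haX hlt ha₀pre ha'Wa₀ haa' hlen ha'Wa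
  -- unordered version
  have edisj' : ∀ (c a a' : List Bool), a ∈ X → a' ∈ X → a ≠ a' →
      a <+: c → a.length < c.length → c <+: W a →
      a' <+: c → a'.length < c.length → c <+: W a' → False := by
    intro c a a' haX ha'X hne hac halt hcWa ha'c ha'lt hcWa'
    rcases lt_trichotomy a.length a'.length with h | h | h
    · exact edisj c.length c a a' le_rfl haX ha'X h hac hcWa ha'c ha'lt hcWa'
    · rcases List.prefix_or_prefix_of_prefix hac ha'c with hp | hp
      · exact hne (hp.eq_of_length h)
      · exact hne (hp.eq_of_length h.symm).symm
    · exact edisj c.length c a' a le_rfl ha'X haX h ha'c hcWa' hac halt hcWa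
  -- uniqueness of the path-parent
  have huniq : ∀ (x a a' : List Bool), a ∈ X → a' ∈ X →
      a <+: x → a.length < x.length → x <+: W a →
      a' <+: x → a'.length < x.length → x <+: W a' → a = a' := by
    intro x a a' haX ha'X hax halt hxa ha'x ha'lt hxa'
    by_contra hne
    exact edisj' x a a' haX ha'X hne hax halt hxa ha'x ha'lt hxa'
  set rk := rankFun X W with hrkdef
  -- rank increases along conflicts
  have hrk : ∀ (x a : List Bool), a ∈ X → a <+: x → a.length < x.length →
      x <+: W a → rk x = rk a + 1 := by
    intro x a haX hax hlt hxWa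
    have htake : x.take a.length = a := (List.prefix_iff_eq_take.mp hax).symm
    have hEx : ∃ n : Fin x.length, x.take ↑n ∈ X ∧ x <+: W (x.take ↑n) := by
      refine ⟨⟨a.length, hlt⟩, ?_⟩
      show x.take a.length ∈ X ∧ x <+: W (x.take a.length)
      rw [htake]
      exact ⟨haX, hxWa⟩
    rw [hrkdef, rankFun, dif_pos hEx]
    have h0 := hEx.choose_spec
    have hlen0 : (x.take ↑hEx.choose).length < x.length := by
      have := hEx.choose.isLt
      simp only [List.length_take]; omega
    have heq : x.take ↑hEx.choose = a :=
      huniq x _ a h0.1 haX (List.take_prefix _ _) hlen0 h0.2 hax hlt hxWa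
    rw [heq]
  -- support characterisation
  have hsupp : ∀ x ∈ X, ∀ z, z ∈ (mkGuide x (W x)).support ↔ (x <+: z ∧ z <+: W x) := by
    intro x hx z
    have hlcp : lcp x (W x) = x := lcp_of_prefix (hpW x hx).1
    rw [mkGuide_mem_support]
    unfold onPath
    rw [hlcp]
    constructor
    · rintro ⟨h1, h2 | h2⟩
      · have hzx : z = x := h2.eq_of_length (le_antisymm h2.length_le h1.length_le)
        exact ⟨h1, hzx ▸ (hpW x hx).1⟩
      · exact ⟨h1, h2⟩
    · rintro ⟨h1, h2⟩
      exact ⟨h1, Or.inr h2⟩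
  -- edge support (forward direction)
  have hedge : ∀ x ∈ X, ∀ z ∈ (mkGuide x (W x)).edgeSupport,
      x <+: z ∧ x.length < z.length ∧ z <+: W x := by
    intro x hx z hz
    rw [mkGuide_mem_edgeSupport] at hz
    obtain ⟨hz0, hp1, hp2⟩ := hz
    have hlcp : lcp x (W x) = x := lcp_of_prefix (hpW x hx).1
    unfold onPath at hp1 hp2
    rw [hlcp] at hp1 hp2
    obtain ⟨hq1, hq2⟩ := hp1
    obtain ⟨hq3, _⟩ := hp2
    have hzlen : 1 ≤ z.length := by
      cases z with
      | nil => exact absurd rfl hz0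
      | cons _ _ => simp
    have hxlt : x.length < z.length := by
      have h := hq3.length_le
      rw [List.length_dropLast] at h
      omega
    rcases hq2 with h | h
    · have := h.length_le; omega
    · exact ⟨hq1, hxlt, h⟩
  -- rank difference along node conflicts
  have hconf : ∀ (x x' : List Bool), x ∈ X → x' ∈ X → x.length < x'.length →
      ∀ z, z ∈ (mkGuide x (W x)).support → z ∈ (mkGuide x' (W x')).support →
      rk x' = rk x + 1 := by
    intro x x' hx hx' hlen z hz hz'
    rw [hsupp x hx z] at hz
    rw [hsupp x' hx' z] at hz'
    obtain ⟨h1, h2⟩ := hz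
    obtain ⟨h3, h4⟩ := hz'
    by_cases hzx : z = x'
    · subst hzx
      exact hrk z x hx h1 hlen h2
    · exfalso
      have hx'z : x'.length < z.length := by
        rcases Nat.lt_or_ge x'.length z.length with h | h
        · exact h
        · exact (hzx ((h3.eq_of_length_le h).symm)).elim
      have hxz : x.length < z.length := by omega
      have hne : x ≠ x' := fun h => by rw [h] at hlen; omega
      exact edisj' z x x' hx hx' hne h1 hxz h2 h3 hx'z h4
  -- assemble
  refine ⟨W, (fun x => mkGuide x (W x)) '' X,
    fun π => ⟨rk π.nonempty.some % 2, Nat.mod_lt _ (by norm_num)⟩, ?_, ?_, ?_, ?_⟩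
  · intro x hx
    refine ⟨Y1 x, Y2 x, hY x hx, ?_⟩
    rcases hsplit x hx with ⟨_, h⟩ | ⟨_, h⟩
    · exact Or.inl h
    · exact Or.inr h
  · intro x hx
    exact ⟨mkGuide x (W x), Set.mem_image_of_mem _ hx, rfl, rfl⟩
  · rintro π ⟨x, hx, rfl⟩ π' ⟨x', hx', rfl⟩ hne hcf
    have hxx : x ≠ x' := fun h => hne (by rw [h])
    obtain ⟨z, hz, hz'⟩ := hcf
    have hlne : x.length ≠ x'.length := by
      intro h
      rw [hsupp x hx z] at hz
      rw [hsupp x' hx' z] at hz'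
      rcases List.prefix_or_prefix_of_prefix hz.1 hz'.1 with hp | hp
      · exact hxx (hp.eq_of_length h)
      · exact hxx (hp.eq_of_length h.symm).symm
    intro hc
    have hval := congrArg Fin.val hc
    simp only [mkGuide_some] at hval
    rcases lt_or_gt_of_ne hlne with h | h
    · have hr := hconf x x' hx hx' h z hz hz'
      omega
    · have hr := hconf x' x hx' hx h z hz' hz
      omega
  · rintro π ⟨x, hx, rfl⟩ π' ⟨x', hx', rfl⟩ hne
    have hxx : x ≠ x' := fun h => hne (by rw [h])
    rw [Set.disjoint_left]
    intro z hz hz'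
    obtain ⟨h1, h2, h3⟩ := hedge x hx z hz
    obtain ⟨h4, h5, h6⟩ := hedge x' hx' z hz'
    exact edisj' z x x' hx hx' hxx h1 h2 h3 h4 h5 h6
end

section
/- Let σ be a forward Ramseyan split with respect to a morphism α : Σ* → S on a finite tree t. If e₁ < e₂ < ⋯ < e_m (m ≥ 3) are tree edges on one path that are pairwise neighboring with respect to σ, then for all indices 1 ≤ i < j ≤ m with j ≥ i+2: α(word_t(e₁, e_j)) = α(word_t(e₁, e_{i+1})) · α(word_t(e_{i+1}, e_{i+2})) · α(word_t(e_{j-1}, e_j)); in particular α(word_t(e₁, e_m)) = α(word_t(e₁,e₂)) · α(word_t(e₂,e₃)) · α(word_t(e_{m-1},e_m)). -/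
/-! Tree edges of the (complete infinite) binary tree are identified with their
lower endpoints (lists of booleans); the ancestor order on edges is `<+:`. -/

/-- Labels on the path from the target node of edge `e` to the source node of
edge `f`, for comparable edges `e <+: f` (empty when `e = f`). -/
def wordBetween {A : Type*} (ℓ : List Bool → A) (e f : List Bool) : List A :=
  (List.range (f.length - e.length)).map fun i => ℓ (f.take (e.length + i))

/-- Edges `e <+: f` are neighbors w.r.t. split `σ`: `σ e = σ f` and all edges
strictly between get values at most `σ e`. -/
def Neighbors (σ : List Bool → ℕ) (e f : List Bool) : Prop :=
  e <+: f ∧ e ≠ f ∧ σ e = σ f ∧ ∀ g, e <+: g → g <+: f → g ≠ e → g ≠ f → σ g ≤ σ e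

/-- `σ` is a forward Ramseyan split w.r.t. the morphism `α`. -/
def ForwardRamseyan {A S : Type*} [Monoid S] (ℓ : List Bool → A) (α : List A → S)
    (σ : List Bool → ℕ) : Prop :=
  ∀ e f g, Neighbors σ e f → Neighbors σ f g → Neighbors σ e g →
    α (wordBetween ℓ e f) = α (wordBetween ℓ e g)

lemma wordBetween_append {A : Type*} (ℓ : List Bool → A) {e f g : List Bool}
    (hef : e <+: f) (hfg : f <+: g) :
    wordBetween ℓ e g = wordBetween ℓ e f ++ wordBetween ℓ f g := by
  have hne : e.length ≤ f.length := hef.length_le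
  have hnf : f.length ≤ g.length := hfg.length_le
  have hsplit : g.length - e.length = (f.length - e.length) + (g.length - f.length) := by
    omega
  unfold wordBetween
  rw [hsplit, List.range_add, List.map_append, List.map_map]
  congr 1
  · apply List.map_congr_left
    intro i hi
    rw [List.mem_range] at hi
    obtain ⟨t, rfl⟩ := hfg
    rw [List.take_append_of_le_length (by omega)]
  · apply List.map_congr_left
    intro i hi
    simp only [Function.comp_apply]
    congr 2
    omega

/-- For pairwise neighboring edges `e 1 < e 2 < ⋯ < e m` (`m ≥ 3`) of a forward
Ramseyan split, the image of the whole word is determined by the first two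
segments and the last segment. -/
theorem stmt7 {A S : Type*} [Monoid S] (ℓ : List Bool → A) (α : List A → S)
    (hhom : ∀ u v : List A, α (u ++ v) = α u * α v)
    (σ : List Bool → ℕ) (hram : ForwardRamseyan ℓ α σ)
    (m : ℕ) (hm : 3 ≤ m) (e : ℕ → List Bool)
    (hchain : ∀ i j, 1 ≤ i → i < j → j ≤ m → Neighbors σ (e i) (e j)) :
    (∀ i j, 1 ≤ i → i + 2 ≤ j → j ≤ m →
      α (wordBetween ℓ (e 1) (e j)) =
        α (wordBetween ℓ (e 1) (e (i + 1))) *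
        α (wordBetween ℓ (e (i + 1)) (e (i + 2))) *
        α (wordBetween ℓ (e (j - 1)) (e j))) ∧
    α (wordBetween ℓ (e 1) (e m)) =
      α (wordBetween ℓ (e 1) (e 2)) * α (wordBetween ℓ (e 2) (e 3)) *
      α (wordBetween ℓ (e (m - 1)) (e m)) := by
  -- splitting lemma for α on segments
  have hsplit : ∀ j k, 1 ≤ j → j < k → k ≤ m →
      α (wordBetween ℓ (e 1) (e k)) =
        α (wordBetween ℓ (e 1) (e j)) * α (wordBetween ℓ (e j) (e k)) := by
    intro j k hj hjk hk
    rcases Nat.lt_or_ge 1 j with h1j | h1j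
    · have h1 := (hchain 1 j le_rfl h1j (by omega)).1
      have h2 := (hchain j k hj hjk hk).1
      rw [wordBetween_append ℓ h1 h2, hhom]
    · have hj1 : j = 1 := by omega
      subst hj1
      have : wordBetween ℓ (e 1) (e 1) = [] := by
        unfold wordBetween; simp
      rw [this]
      have := hhom [] (wordBetween ℓ (e 1) (e k))
      simp at this
      rw [← this]
  -- constancy : for 2 ≤ k ≤ m, α(word(e1,ek)) = α(word(e1,e2))
  have hconst : ∀ k, 2 ≤ k → k ≤ m →
      α (wordBetween ℓ (e 1) (e k)) = α (wordBetween ℓ (e 1) (e 2)) := by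
    intro k h2k hkm
    rcases Nat.eq_or_lt_of_le h2k with h | h
    · rw [← h]
    · exact (hram (e 1) (e 2) (e k)
        (hchain 1 2 le_rfl one_lt_two (by omega))
        (hchain 2 k one_le_two h (by omega))
        (hchain 1 k le_rfl (by omega) hkm)).symm
  have key : ∀ i j, 1 ≤ i → i + 2 ≤ j → j ≤ m →
      α (wordBetween ℓ (e 1) (e j)) =
        α (wordBetween ℓ (e 1) (e (i + 1))) *
        α (wordBetween ℓ (e (i + 1)) (e (i + 2))) *
        α (wordBetween ℓ (e (j - 1)) (e j)) := by
    intro i j hi hij hjm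
    have h1 : α (wordBetween ℓ (e 1) (e (i + 1))) *
        α (wordBetween ℓ (e (i + 1)) (e (i + 2))) =
        α (wordBetween ℓ (e 1) (e (i + 2))) :=
      (hsplit (i + 1) (i + 2) (by omega) (by omega) (by omega)).symm
    rw [h1, hconst (i + 2) (by omega) (by omega),
      ← hconst (j - 1) (by omega) (by omega),
      ← hsplit (j - 1) j (by omega) (by omega) hjm]
  refine ⟨key, ?_⟩
  have := key 1 m le_rfl hm le_rfl
  simpa using this
end

section
/- Suppose L₁ and L₂ are languages of data trees over alphabets Σ₁ and Σ₂ recognizable by class automata, and suppose f : Σ₁ → Σ₂ is a function, extended to a relabeling f̂ on data trees that applies f to every node label while preserving tree structure and data values. Then the image f̂(L₁) and the inverse image f̂⁻¹(L₂) are also recognizable by class automata. Moreover, if L, L' are class-automaton-recognizable languages over the same alphabet, then L ∪ L' and L ∩ L' are class-automaton recognizable. -/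
/-- Finite binary trees with labels in `A`. -/
inductive BTree (A : Type) : Type
  | leaf : BTree A
  | node : A → BTree A → BTree A → BTree A

namespace BTree

def map {A B : Type} (f : A → B) : BTree A → BTree B
  | .leaf => .leaf
  | .node a l r => .node (f a) (l.map f) (r.map f)

/-- Positions (nodes) of a tree: root-to-node paths. -/
def pos {A : Type} : BTree A → Set (List Bool)
  | .leaf => ∅
  | .node _ l r =>
      insert [] ({p | ∃ q ∈ l.pos, p = false :: q} ∪ {p | ∃ q ∈ r.pos, p = true :: q})

/-- Two trees have the same shape (same set of nodes). -/
def SameShape {A B : Type} (t : BTree A) (s : BTree B) : Prop :=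
  t.map (fun _ => ()) = s.map (fun _ => ())

/-- Zip of two trees of the same shape. -/
def zip {A B : Type} : BTree A → BTree B → BTree (A × B)
  | .node a l r, .node b l' r' => .node (a, b) (l.zip l') (r.zip r')
  | _, _ => .leaf

open Classical in
/-- Mark a tree by the characteristic function of a set of positions. -/
noncomputable def markAux {A : Type} (X : Set (List Bool)) :
    List Bool → BTree A → BTree (A × Bool)
  | _, .leaf => .leaf
  | p, .node a l r =>
      .node (a, if p ∈ X then true else false)
        (markAux X (p ++ [false]) l) (markAux X (p ++ [true]) r)

/-- `t.mark X` is `t ⊗ X`. -/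
noncomputable def mark {A : Type} (t : BTree A) (X : Set (List Bool)) :
    BTree (A × Bool) :=
  markAux X [] t

end BTree

/-- A nondeterministic bottom-up tree automaton; its languages are exactly the
regular tree languages. -/
structure NTA (A : Type) where
  n : ℕ
  init : Set (Fin n)
  step : A → Fin n → Fin n → Set (Fin n)
  acc : Set (Fin n)

def NTA.eval {A : Type} (M : NTA A) : BTree A → Set (Fin M.n)
  | .leaf => M.init
  | .node a l r => {q | ∃ ql ∈ M.eval l, ∃ qr ∈ M.eval r, q ∈ M.step a ql qr}

def NTA.Accepts {A : Type} (M : NTA A) (t : BTree A) : Prop :=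
  (M.eval t ∩ M.acc).Nonempty

/-- `r` is an equivalence relation on the positions of `t`, i.e. `(t, r)` is a
data tree. -/
def IsDataTree {A : Type} (t : BTree A) (r : List Bool → List Bool → Prop) : Prop :=
  (∀ x ∈ t.pos, r x x) ∧ (∀ x y, r x y → r y x) ∧
  (∀ x y z, r x y → r y z → r x z) ∧ (∀ x y, r x y → x ∈ t.pos ∧ y ∈ t.pos)

/-- `X` is a class of the data tree `(t, r)`. -/
def IsClass {A : Type} (t : BTree A) (r : List Bool → List Bool → Prop)
    (X : Set (List Bool)) : Prop :=
  ∃ x ∈ t.pos, X = {y | r x y}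

/-- A class automaton: a work alphabet `Γ`, a letter-to-letter transducer
(a regular tree language over `A × Γ`) and a regular class condition over
`Γ × Bool`. -/
structure ClassAut (A : Type) where
  Γ : Type
  finite : Finite Γ
  trans : NTA (A × Γ)
  cond : NTA (Γ × Bool)

/-- Acceptance of a data tree by a class automaton: some transducer output `s`
(of the same shape) is such that for every class `X`, the marked tree `s ⊗ X`
satisfies the class condition. -/
def ClassAut.Accepts {A : Type} (M : ClassAut A) (t : BTree A)
    (r : List Bool → List Bool → Prop) : Prop :=
  ∃ s : BTree M.Γ, BTree.SameShape t s ∧ M.trans.Accepts (t.zip s) ∧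
    ∀ X, IsClass t r X → M.cond.Accepts (s.mark X)

/-- A language of data trees. -/
abbrev DataLang (A : Type) :=
  Set (BTree A × (List Bool → List Bool → Prop))

/-- Recognizability by class automata. -/
def RecognizableCA {A : Type} (L : DataLang A) : Prop :=
  ∃ M : ClassAut A, ∀ t r, IsDataTree t r → ((t, r) ∈ L ↔ M.Accepts t r)

/-!
Regular tree languages are closed under inverse images and images of letter-to-letter
relabelings (the automaton for the image guesses a preimage of each letter), under intersection
(product automaton) and under union (disjoint sum of automata). A class automaton amounts to a
finite work alphabet `Γ` together with two regular languages, the transducer over `Σ × Γ` and the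
class condition over `Γ × Bool`, and each closure property follows by performing the matching
operation on both: pull them back along a relabeling `f`; for the image under `f`, enlarge the work
alphabet to `Σ₁ × Γ` so that the transducer guesses the preimage of the input; for union and
intersection, take the disjoint sum, resp. the product, of the two work alphabets.
-/

namespace BTree

variable {A B C : Type}

@[simp]
theorem map_leaf (f : A → B) : (leaf : BTree A).map f = leaf := rfl

@[simp]
theorem map_node (f : A → B) (a : A) (l r : BTree A) :
    (node a l r).map f = node (f a) (l.map f) (r.map f) := rfl

@[simp]
theorem map_map (f : A → B) (g : B → C) (t : BTree A) :
    (t.map f).map g = t.map (g ∘ f) := by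
  induction t <;> simp_all

@[simp]
theorem map_id' (t : BTree A) : t.map (fun x => x) = t := by
  induction t <;> simp_all

@[simp]
theorem map_eq_leaf_iff {f : A → B} {t : BTree A} : t.map f = leaf ↔ t = leaf := by
  cases t <;> simp

theorem map_injective {f : A → B} (hf : Function.Injective f) :
    Function.Injective (map f) := by
  intro t u h
  induction t generalizing u with
  | leaf => exact (map_eq_leaf_iff.mp h.symm).symm
  | node a l r ihl ihr =>
    cases u with
    | leaf => simp at h
    | node b l' r' =>
      simp only [map_node, node.injEq] at h
      rw [hf h.1, ihl h.2.1, ihr h.2.2]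

theorem eq_leaf_of_map_eq_map {f : A → C} {g : B → C} (hfg : ∀ a b, f a ≠ g b)
    {t : BTree A} {u : BTree B} (h : t.map f = u.map g) : t = leaf := by
  cases t <;> cases u <;> simp_all

theorem exists_map_prodMap_eq_of_map_fst_eq {Γ : Type} {f : A → B} {w : BTree (B × Γ)}
    {t : BTree A} (h : w.map Prod.fst = t.map f) :
    ∃ w' : BTree (A × Γ), w'.map Prod.fst = t ∧ w'.map (Prod.map f id) = w := by
  induction t generalizing w with
  | leaf => exact ⟨leaf, rfl, (map_eq_leaf_iff.mp h).symm⟩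
  | node a l r ihl ihr =>
    cases w with
    | leaf => simp at h
    | node x wl wr =>
      simp only [map_node, node.injEq] at h
      obtain ⟨wl', rfl, rfl⟩ := ihl h.2.1
      obtain ⟨wr', rfl, rfl⟩ := ihr h.2.2
      exact ⟨node (a, x.2) wl' wr', rfl, by simp [← h.1]⟩

theorem mem_of_map_mem_image_union {f : A → C} {g : B → C} (hf : Function.Injective f)
    (hfg : ∀ a b, f a ≠ g b) {S : Set (BTree A)} {S' : Set (BTree B)} {v : BTree A}
    (hv : v ≠ leaf) (h : v.map f ∈ map f '' S ∪ map g '' S') : v ∈ S := by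
  rcases h with ⟨u, hu, huv⟩ | ⟨u, -, huv⟩
  · rwa [← map_injective hf huv]
  · exact absurd (eq_leaf_of_map_eq_map hfg huv.symm) hv

@[simp]
theorem pos_map (f : A → B) (t : BTree A) : (t.map f).pos = t.pos := by
  induction t <;> simp_all [pos]

theorem markAux_map (f : A → B) (X : Set (List Bool)) (p : List Bool) (t : BTree A) :
    markAux X p (t.map f) = (markAux X p t).map (Prod.map f id) := by
  induction t generalizing p <;> simp_all [markAux]

theorem mark_map (f : A → B) (X : Set (List Bool)) (t : BTree A) :
    (t.map f).mark X = (t.mark X).map (Prod.map f id) :=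
  markAux_map f X [] t

@[simp]
theorem mark_eq_leaf_iff {t : BTree A} {X : Set (List Bool)} : t.mark X = leaf ↔ t = leaf := by
  cases t <;> simp [mark, markAux]

theorem map_fst_zip {t : BTree A} {s : BTree B} (h : SameShape t s) :
    (t.zip s).map Prod.fst = t := by
  induction t generalizing s with
  | leaf => rfl
  | node a l r ihl ihr =>
    cases s with
    | leaf => simp [SameShape] at h
    | node b l' r' =>
      simp only [SameShape, map_node, node.injEq] at h
      simp [zip, ihl h.2.1, ihr h.2.2]

theorem map_snd_zip {t : BTree A} {s : BTree B} (h : SameShape t s) :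
    (t.zip s).map Prod.snd = s := by
  induction t generalizing s with
  | leaf =>
    cases s with
    | leaf => rfl
    | node => simp [SameShape] at h
  | node a l r ihl ihr =>
    cases s with
    | leaf => simp [SameShape] at h
    | node b l' r' =>
      simp only [SameShape, map_node, node.injEq] at h
      simp [zip, ihl h.2.1, ihr h.2.2]

@[simp]
theorem zip_map_fst_map_snd (w : BTree (A × B)) : (w.map Prod.fst).zip (w.map Prod.snd) = w := by
  induction w with
  | leaf => rfl
  | node => simp_all [zip]

theorem sameShape_map_map (w : BTree A) (f : A → B) (g : A → C) :
    SameShape (w.map f) (w.map g) := by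
  simp [SameShape, Function.comp_def]

end BTree

/-- Like `NTA`, but with an arbitrary type of states, so that products and disjoint unions of
automata need no renumbering. -/
structure TreeAut (S A : Type) where
  init : Set S
  step : A → S → S → Set S
  acc : Set S

namespace TreeAut

variable {S S' A B : Type}

def eval (M : TreeAut S A) : BTree A → Set S
  | .leaf => M.init
  | .node a l r => {q | ∃ ql ∈ M.eval l, ∃ qr ∈ M.eval r, q ∈ M.step a ql qr}

def lang (M : TreeAut S A) : Set (BTree A) :=
  {t | (M.eval t ∩ M.acc).Nonempty}

def ofNTA (M : NTA A) : TreeAut (Fin M.n) A :=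
  ⟨M.init, M.step, M.acc⟩

theorem lang_ofNTA (M : NTA A) : (ofNTA M).lang = {t | M.Accepts t} := by
  have heval : ∀ t, (ofNTA M).eval t = M.eval t := by
    intro t
    induction t with
    | leaf => rfl
    | node a l r ihl ihr => simp only [eval, NTA.eval, ihl, ihr]; rfl
  ext t
  simp only [lang, heval]
  rfl

def equiv (e : S ≃ S') (M : TreeAut S A) : TreeAut S' A :=
  ⟨e '' M.init, fun a q p => e '' M.step a (e.symm q) (e.symm p), e '' M.acc⟩

theorem lang_equiv (e : S ≃ S') (M : TreeAut S A) : (M.equiv e).lang = M.lang := by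
  have heval : ∀ t, (M.equiv e).eval t = e '' M.eval t := by
    intro t
    induction t with
    | leaf => rfl
    | node a l r ihl ihr =>
      simp only [eval]
      rw [ihl, ihr]
      ext q
      simp [equiv, e.symm.surjective.exists]
  ext t
  simp only [lang, heval]
  simp [equiv]

def comap (g : A → B) (M : TreeAut S B) : TreeAut S A :=
  ⟨M.init, fun a => M.step (g a), M.acc⟩

theorem eval_comap (g : A → B) (M : TreeAut S B) (t : BTree A) :
    (M.comap g).eval t = M.eval (t.map g) := by
  induction t with
  | leaf => rfl
  | node a l r ihl ihr => simp only [eval, ihl, ihr, BTree.map_node]; rfl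

theorem lang_comap (g : A → B) (M : TreeAut S B) :
    (M.comap g).lang = BTree.map g ⁻¹' M.lang := by
  ext t
  simp only [lang, eval_comap]
  rfl

def map (g : A → B) (M : TreeAut S A) : TreeAut S B :=
  ⟨M.init, fun b q p => {q' | ∃ a, g a = b ∧ q' ∈ M.step a q p}, M.acc⟩

theorem eval_map (g : A → B) (M : TreeAut S A) (t : BTree B) :
    (M.map g).eval t = {q | ∃ u, u.map g = t ∧ q ∈ M.eval u} := by
  induction t with
  | leaf => ext q; simp [eval, map]
  | node b l r ihl ihr =>
    ext q
    constructor
    · rintro ⟨ql, hql, qr, hqr, a, rfl, hq⟩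
      rw [ihl] at hql
      rw [ihr] at hqr
      obtain ⟨ul, rfl, hql⟩ := hql
      obtain ⟨ur, rfl, hqr⟩ := hqr
      exact ⟨.node a ul ur, rfl, ql, hql, qr, hqr, hq⟩
    · rintro ⟨_ | ⟨a, ul, ur⟩, hu, hq⟩
      · simp at hu
      · simp only [BTree.map_node, BTree.node.injEq] at hu
        obtain ⟨rfl, rfl, rfl⟩ := hu
        obtain ⟨ql, hql, qr, hqr, hq⟩ := hq
        exact ⟨ql, ihl ▸ ⟨ul, rfl, hql⟩, qr, ihr ▸ ⟨ur, rfl, hqr⟩, a, rfl, hq⟩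

theorem lang_map (g : A → B) (M : TreeAut S A) : (M.map g).lang = BTree.map g '' M.lang := by
  ext t
  simp only [lang, eval_map, Set.mem_image, Set.mem_ofPred_eq]
  constructor
  · rintro ⟨q, ⟨u, rfl, hq⟩, hacc⟩
    exact ⟨u, ⟨q, hq, hacc⟩, rfl⟩
  · rintro ⟨u, ⟨q, hq, hacc⟩, rfl⟩
    exact ⟨q, ⟨u, rfl, hq⟩, hacc⟩

def prod (M : TreeAut S A) (N : TreeAut S' A) : TreeAut (S × S') A :=
  ⟨M.init ×ˢ N.init, fun a q p => M.step a q.1 p.1 ×ˢ N.step a q.2 p.2, M.acc ×ˢ N.acc⟩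

theorem eval_prod (M : TreeAut S A) (N : TreeAut S' A) (t : BTree A) :
    (M.prod N).eval t = M.eval t ×ˢ N.eval t := by
  induction t with
  | leaf => rfl
  | node a l r ihl ihr =>
    ext ⟨q, q'⟩
    simp only [eval]
    rw [ihl, ihr]
    simp only [prod, Set.mem_prod, Set.mem_ofPred_eq, Prod.exists]
    constructor
    · rintro ⟨ql, ql', ⟨hql, hql'⟩, qr, qr', ⟨hqr, hqr'⟩, hq, hq'⟩
      exact ⟨⟨ql, hql, qr, hqr, hq⟩, ⟨ql', hql', qr', hqr', hq'⟩⟩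
    · rintro ⟨⟨ql, hql, qr, hqr, hq⟩, ⟨ql', hql', qr', hqr', hq'⟩⟩
      exact ⟨ql, ql', ⟨hql, hql'⟩, qr, qr', ⟨hqr, hqr'⟩, hq, hq'⟩

theorem lang_prod (M : TreeAut S A) (N : TreeAut S' A) :
    (M.prod N).lang = M.lang ∩ N.lang := by
  ext t
  simp only [lang, eval_prod]
  simp only [prod, Set.mem_inter_iff, Set.mem_ofPred_eq, Set.prod_inter_prod,
    Set.prod_nonempty_iff]

def sum (M : TreeAut S A) (N : TreeAut S' A) : TreeAut (S ⊕ S') A where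
  init := Sum.inl '' M.init ∪ Sum.inr '' N.init
  step a := Sum.elim (fun q => Sum.elim (fun p => Sum.inl '' M.step a q p) fun _ => ∅)
    (fun q => Sum.elim (fun _ => ∅) fun p => Sum.inr '' N.step a q p)
  acc := Sum.inl '' M.acc ∪ Sum.inr '' N.acc

theorem eval_sum (M : TreeAut S A) (N : TreeAut S' A) (t : BTree A) :
    (M.sum N).eval t = Sum.inl '' M.eval t ∪ Sum.inr '' N.eval t := by
  induction t with
  | leaf => rfl
  | node a l r ihl ihr =>
    simp only [eval]
    rw [ihl, ihr]
    ext (q | q) <;> simp [sum]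

theorem lang_sum (M : TreeAut S A) (N : TreeAut S' A) :
    (M.sum N).lang = M.lang ∪ N.lang := by
  ext t
  simp only [lang, eval_sum]
  simp [sum, Set.nonempty_def]

end TreeAut

def IsRegularTreeLang {A : Type} (L : Set (BTree A)) : Prop :=
  ∃ (S : Type) (_ : Finite S) (M : TreeAut S A), M.lang = L

theorem NTA.isRegularTreeLang {A : Type} (M : NTA A) : IsRegularTreeLang {t | M.Accepts t} :=
  ⟨_, inferInstance, _, TreeAut.lang_ofNTA M⟩

namespace IsRegularTreeLang

variable {A B : Type} {L L' : Set (BTree A)}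

theorem exists_nta (hL : IsRegularTreeLang L) : ∃ M : NTA A, {t | M.Accepts t} = L := by
  obtain ⟨S, _, M, rfl⟩ := hL
  let M' := M.equiv (Finite.equivFin S)
  refine ⟨⟨_, M'.init, M'.step, M'.acc⟩, ?_⟩
  rw [← TreeAut.lang_ofNTA, ← M.lang_equiv (Finite.equivFin S)]
  rfl

theorem preimage_map (g : B → A) (hL : IsRegularTreeLang L) :
    IsRegularTreeLang (BTree.map g ⁻¹' L) := by
  obtain ⟨S, hS, M, rfl⟩ := hL
  exact ⟨S, hS, M.comap g, M.lang_comap g⟩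

theorem image_map (g : A → B) (hL : IsRegularTreeLang L) :
    IsRegularTreeLang (BTree.map g '' L) := by
  obtain ⟨S, hS, M, rfl⟩ := hL
  exact ⟨S, hS, M.map g, M.lang_map g⟩

theorem inter (hL : IsRegularTreeLang L) (hL' : IsRegularTreeLang L') :
    IsRegularTreeLang (L ∩ L') := by
  obtain ⟨S, _, M, rfl⟩ := hL
  obtain ⟨S', _, M', rfl⟩ := hL'
  exact ⟨S × S', inferInstance, M.prod M', M.lang_prod M'⟩

theorem union (hL : IsRegularTreeLang L) (hL' : IsRegularTreeLang L') :
    IsRegularTreeLang (L ∪ L') := by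
  obtain ⟨S, _, M, rfl⟩ := hL
  obtain ⟨S', _, M', rfl⟩ := hL'
  exact ⟨S ⊕ S', inferInstance, M.sum M', M.lang_sum M'⟩

end IsRegularTreeLang

section ClassAutomata

variable {A B Γ Γ' : Type}

@[simp]
theorem isClass_map (f : A → B) (t : BTree A) (r : List Bool → List Bool → Prop)
    (X : Set (List Bool)) : IsClass (t.map f) r X ↔ IsClass t r X := by
  simp [IsClass]

@[simp]
theorem isDataTree_map (f : A → B) (t : BTree A) (r : List Bool → List Bool → Prop) :
    IsDataTree (t.map f) r ↔ IsDataTree t r := by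
  simp [IsDataTree]

theorem IsClass.ne_leaf {t : BTree A} {r : List Bool → List Bool → Prop} {X : Set (List Bool)}
    (h : IsClass t r X) : t ≠ .leaf := by
  rintro rfl
  obtain ⟨x, hx, -⟩ := h
  exact hx

/-- Acceptance by a class automaton with transducer `T` and class condition `C`, phrased
through the run `w = t ⊗ s` of the transducer instead of its output `s`. -/
def ClassAccepts (T : Set (BTree (A × Γ))) (C : Set (BTree (Γ × Bool))) (t : BTree A)
    (r : List Bool → List Bool → Prop) : Prop :=
  ∃ w ∈ T, w.map Prod.fst = t ∧ ∀ X, IsClass t r X → (w.map Prod.snd).mark X ∈ C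

theorem ClassAut.accepts_iff_classAccepts (M : ClassAut A) (t : BTree A)
    (r : List Bool → List Bool → Prop) :
    M.Accepts t r ↔ ClassAccepts {w | M.trans.Accepts w} {v | M.cond.Accepts v} t r := by
  constructor
  · rintro ⟨s, hs, hT, hC⟩
    refine ⟨t.zip s, hT, BTree.map_fst_zip hs, ?_⟩
    rwa [BTree.map_snd_zip hs]
  · rintro ⟨w, hT, rfl, hC⟩
    exact ⟨w.map Prod.snd, BTree.sameShape_map_map w _ _, by simpa using hT, hC⟩

theorem recognizableCA_iff {L : DataLang A} :
    RecognizableCA L ↔ ∃ (Γ : Type) (_ : Finite Γ) (T : Set (BTree (A × Γ)))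
      (C : Set (BTree (Γ × Bool))), IsRegularTreeLang T ∧ IsRegularTreeLang C ∧
      ∀ t r, IsDataTree t r → ((t, r) ∈ L ↔ ClassAccepts T C t r) := by
  constructor
  · rintro ⟨M, hM⟩
    refine ⟨M.Γ, M.finite, _, _, M.trans.isRegularTreeLang, M.cond.isRegularTreeLang,
      fun t r hdt => ?_⟩
    rw [hM t r hdt, M.accepts_iff_classAccepts]
  · rintro ⟨Γ, hΓ, T, C, hT, hC, hL⟩
    obtain ⟨MT, rfl⟩ := hT.exists_nta
    obtain ⟨MC, rfl⟩ := hC.exists_nta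
    refine ⟨⟨Γ, hΓ, MT, MC⟩, fun t r hdt => ?_⟩
    rw [hL t r hdt, ClassAut.accepts_iff_classAccepts]

namespace ClassAccepts

variable {T T' : Set (BTree (A × Γ))} {C C' : Set (BTree (Γ × Bool))} {t : BTree A}
  {r : List Bool → List Bool → Prop}

theorem mono (hT : T ⊆ T') (hC : C ⊆ C') (h : ClassAccepts T C t r) :
    ClassAccepts T' C' t r := by
  obtain ⟨w, hw, hwt, hX⟩ := h
  exact ⟨w, hT hw, hwt, fun X hX' => hC (hX X hX')⟩

theorem image_map (ι : Γ → Γ') (h : ClassAccepts T C t r) :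
    ClassAccepts (BTree.map (Prod.map id ι) '' T) (BTree.map (Prod.map ι id) '' C) t r := by
  obtain ⟨w, hw, rfl, hX⟩ := h
  refine ⟨_, Set.mem_image_of_mem _ hw, by simp [Function.comp_def], fun X hX' => ?_⟩
  refine ⟨_, hX X (by simpa [Function.comp_def] using hX'), ?_⟩
  simp [BTree.mark_map, Function.comp_def, Prod.map_map]

theorem of_image_map {ι : Γ → Γ'} {C' : Set (BTree (Γ' × Bool))}
    (hC : ∀ v, v ≠ .leaf → v.map (Prod.map ι id) ∈ C' → v ∈ C)
    (h : ClassAccepts (BTree.map (Prod.map id ι) '' T) C' t r) : ClassAccepts T C t r := by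
  obtain ⟨_, ⟨w, hw, rfl⟩, rfl, hX⟩ := h
  refine ⟨w, hw, by simp [Function.comp_def], fun X hX' => hC _ ?_ ?_⟩
  · simpa [Function.comp_def] using hX'.ne_leaf
  · simpa [BTree.mark_map, Function.comp_def, Prod.map_map] using hX X hX'

end ClassAccepts

variable {T : Set (BTree (A × Γ))} {T' : Set (BTree (A × Γ'))} {C : Set (BTree (Γ × Bool))}
  {C' : Set (BTree (Γ' × Bool))} {t : BTree A} {r : List Bool → List Bool → Prop}

theorem classAccepts_sum_iff :
    ClassAccepts (BTree.map (Prod.map id Sum.inl) '' T ∪ BTree.map (Prod.map id Sum.inr) '' T')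
        (BTree.map (Prod.map Sum.inl id) '' C ∪ BTree.map (Prod.map Sum.inr id) '' C') t r ↔
      ClassAccepts T C t r ∨ ClassAccepts T' C' t r := by
  constructor
  · -- A class is nonempty, and a nonempty tree over `Γ` is not the image of one over `Γ'`.
    rintro ⟨w, hw | hw', hwt, hX⟩
    · refine .inl (.of_image_map (fun v hv hvC => ?_) ⟨w, hw, hwt, hX⟩)
      exact BTree.mem_of_map_mem_image_union
        (Sum.inl_injective.prodMap Function.injective_id) (by simp) hv hvC
    · refine .inr (.of_image_map (fun v hv hvC => ?_) ⟨w, hw', hwt, hX⟩)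
      rw [Set.union_comm] at hvC
      exact BTree.mem_of_map_mem_image_union
        (Sum.inr_injective.prodMap Function.injective_id) (by simp) hv hvC
  · rintro (h | h)
    · exact (h.image_map Sum.inl).mono Set.subset_union_left Set.subset_union_left
    · exact (h.image_map Sum.inr).mono Set.subset_union_right Set.subset_union_right

theorem classAccepts_prod_iff :
    ClassAccepts
        (BTree.map (Prod.map id Prod.fst) ⁻¹' T ∩ BTree.map (Prod.map id Prod.snd) ⁻¹' T')
        (BTree.map (Prod.map Prod.fst id) ⁻¹' C ∩ BTree.map (Prod.map Prod.snd id) ⁻¹' C')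
        t r ↔
      ClassAccepts T C t r ∧ ClassAccepts T' C' t r := by
  simp only [ClassAccepts, Set.mem_inter_iff, Set.mem_preimage, ← BTree.mark_map]
  constructor
  · rintro ⟨w, ⟨hw, hw'⟩, rfl, hX⟩
    refine ⟨⟨_, hw, ?_, fun X hX' => ?_⟩, ⟨_, hw', ?_, fun X hX' => ?_⟩⟩
    all_goals simp only [BTree.map_map] at hX ⊢
    exacts [rfl, (hX X hX').1, rfl, (hX X hX').2]
  · rintro ⟨⟨w₁, hw₁, hw₁t, hX₁⟩, ⟨w₂, hw₂, rfl, hX₂⟩⟩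
    obtain ⟨w, rfl, rfl⟩ := BTree.exists_map_prodMap_eq_of_map_fst_eq hw₁t
    refine ⟨w.map fun p => (p.1.1, (p.2, p.1.2)), ⟨?_, ?_⟩, ?_, fun X hX => ⟨?_, ?_⟩⟩
    all_goals simp only [BTree.map_map] at *
    exacts [hw₁, hw₂, rfl, hX₁ X hX, hX₂ X hX]

end ClassAutomata

namespace RecognizableCA

variable {A B : Type}

theorem preimage_map (f : A → B) {L : DataLang B} (h : RecognizableCA L) :
    RecognizableCA {p : BTree A × (List Bool → List Bool → Prop) |
        (p.1.map f, p.2) ∈ L} := by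
  obtain ⟨Γ, hΓ, T, C, hT, hC, hL⟩ := recognizableCA_iff.mp h
  refine recognizableCA_iff.mpr ⟨Γ, hΓ, BTree.map (Prod.map f id) ⁻¹' T, C,
    hT.preimage_map _, hC, fun t r hdt => ?_⟩
  rw [Set.mem_ofPred_eq, hL _ r ((isDataTree_map f t r).mpr hdt)]
  constructor
  · rintro ⟨w, hw, hwt, hX⟩
    obtain ⟨w', rfl, rfl⟩ := BTree.exists_map_prodMap_eq_of_map_fst_eq hwt
    refine ⟨w', hw, rfl, fun X hX' => ?_⟩
    simpa [Prod.map_snd'] using hX X ((isClass_map f _ r X).mpr hX')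
  · rintro ⟨w, hw, rfl, hX⟩
    refine ⟨w.map (Prod.map f id), hw, by rw [BTree.map_map, BTree.map_map]; rfl,
      fun X hX' => ?_⟩
    simpa [Prod.map_snd'] using hX X ((isClass_map f _ r X).mp hX')

theorem image_map [Finite A] (f : A → B) {L : DataLang A} (h : RecognizableCA L) :
    RecognizableCA {p : BTree B × (List Bool → List Bool → Prop) |
        ∃ t, (t, p.2) ∈ L ∧ p.1 = t.map f} := by
  obtain ⟨Γ, hΓ, T, C, hT, hC, hL⟩ := recognizableCA_iff.mp h
  refine recognizableCA_iff.mpr ⟨A × Γ, inferInstance,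
    BTree.map (fun y : A × Γ => (f y.1, y)) '' T, BTree.map (Prod.map Prod.snd id) ⁻¹' C,
    hT.image_map _, hC.preimage_map _, fun t r hdt => ?_⟩
  rw [Set.mem_ofPred_eq]
  constructor
  · rintro ⟨t, hmem, rfl⟩
    obtain ⟨w, hw, rfl, hX⟩ := (hL _ r ((isDataTree_map f _ r).mp hdt)).mp hmem
    refine ⟨_, Set.mem_image_of_mem _ hw, by simp only [BTree.map_map]; rfl, fun X hX' => ?_⟩
    simpa [BTree.mark_map, Function.comp_def] using hX X ((isClass_map f _ r X).mp hX')
  · rintro ⟨_, ⟨w, hw, rfl⟩, rfl, hX⟩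
    have ht : (w.map fun y => (f y.1, y)).map Prod.fst = (w.map Prod.fst).map f := by
      simp only [BTree.map_map]; rfl
    rw [ht, isDataTree_map] at hdt
    refine ⟨w.map Prod.fst, (hL _ r hdt).mpr ⟨w, hw, rfl, fun X hX' => ?_⟩, ht⟩
    simpa [BTree.mark_map, Function.comp_def] using hX X (by rwa [ht, isClass_map])

theorem union {L L' : DataLang A} (h : RecognizableCA L) (h' : RecognizableCA L') :
    RecognizableCA (L ∪ L') := by
  obtain ⟨Γ, hΓ, T, C, hT, hC, hL⟩ := recognizableCA_iff.mp h
  obtain ⟨Γ', hΓ', T', C', hT', hC', hL'⟩ := recognizableCA_iff.mp h'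
  refine recognizableCA_iff.mpr ⟨Γ ⊕ Γ', inferInstance, _, _,
    (hT.image_map (Prod.map id Sum.inl)).union (hT'.image_map (Prod.map id Sum.inr)),
    (hC.image_map (Prod.map Sum.inl id)).union (hC'.image_map (Prod.map Sum.inr id)),
    fun t r hdt => ?_⟩
  rw [Set.mem_union, hL t r hdt, hL' t r hdt, classAccepts_sum_iff]

theorem inter {L L' : DataLang A} (h : RecognizableCA L) (h' : RecognizableCA L') :
    RecognizableCA (L ∩ L') := by
  obtain ⟨Γ, hΓ, T, C, hT, hC, hL⟩ := recognizableCA_iff.mp h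
  obtain ⟨Γ', hΓ', T', C', hT', hC', hL'⟩ := recognizableCA_iff.mp h'
  refine recognizableCA_iff.mpr ⟨Γ × Γ', inferInstance, _, _,
    (hT.preimage_map (Prod.map id Prod.fst)).inter (hT'.preimage_map (Prod.map id Prod.snd)),
    (hC.preimage_map (Prod.map Prod.fst id)).inter (hC'.preimage_map (Prod.map Prod.snd id)),
    fun t r hdt => ?_⟩
  rw [Set.mem_inter_iff, hL t r hdt, hL' t r hdt, classAccepts_prod_iff]

end RecognizableCA

theorem stmt10_general {A₁ A₂ : Type} [Finite A₁] (f : A₁ → A₂)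
    (L₁ : DataLang A₁) (L₂ : DataLang A₂) (L L' : DataLang A₁)
    (h₁ : RecognizableCA L₁) (h₂ : RecognizableCA L₂)
    (hL : RecognizableCA L) (hL' : RecognizableCA L') :
    RecognizableCA {p : BTree A₂ × (List Bool → List Bool → Prop) |
        ∃ t, (t, p.2) ∈ L₁ ∧ p.1 = t.map f} ∧
    RecognizableCA {p : BTree A₁ × (List Bool → List Bool → Prop) |
        (p.1.map f, p.2) ∈ L₂} ∧
    RecognizableCA (L ∪ L') ∧ RecognizableCA (L ∩ L') :=
  ⟨h₁.image_map f, h₂.preimage_map f, hL.union hL', hL.inter hL'⟩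

/-- Class-automaton recognizable languages of data trees are closed under
images and inverse images of relabelings, and under union and intersection. -/
theorem stmt10 {A₁ A₂ : Type} [Finite A₁] [Finite A₂] (f : A₁ → A₂)
    (L₁ : DataLang A₁) (L₂ : DataLang A₂) (L L' : DataLang A₁)
    (h₁ : RecognizableCA L₁) (h₂ : RecognizableCA L₂)
    (hL : RecognizableCA L) (hL' : RecognizableCA L') :
    RecognizableCA {p : BTree A₂ × (List Bool → List Bool → Prop) |
        ∃ t, (t, p.2) ∈ L₁ ∧ p.1 = t.map f} ∧
    RecognizableCA {p : BTree A₁ × (List Bool → List Bool → Prop) |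
        (p.1.map f, p.2) ∈ L₂} ∧
    RecognizableCA (L ∪ L') ∧ RecognizableCA (L ∩ L') :=
  stmt10_general f L₁ L₂ L L' h₁ h₂ hL hL'
end

section
/- The property ψ of 2-data words defined by ψ = ∀x∀y (d₁(x)=d₁(y) ↔ d₂(x)=d₂(y)) cannot be recognized by any class automaton over 2-data words. Specifically: for every work alphabet Γ, every letter-to-letter word transducer, and every class condition recognized by a morphism α into a finite monoid S, there exists a 2-data word satisfying ψ that the automaton accepts only if it also accepts some 2-data word violating ψ. -/
/-!
Take the word of length `2n`, `n = |S| + 1`, in which positions `k` and `n + k` carry the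
value `k + 1` on the first attribute and `-(k + 1)` on the second. The class of `k + 1` is
marked exactly at `k` and `n + k`, so its image under `α` factors as `L k * R k`, where `L k`
depends only on the first half of the transducer output and `R k` only on the second half.
By pigeonhole `L i = L j` for some `i ≠ j`. Swapping the first data values at positions `i`
and `j` turns the images of the classes of `i + 1` and `j + 1` into `L j * R i = L i * R i`
and `L i * R j = L j * R j`, and leaves every other class unchanged. So the same transducer
output is still accepted, but now `ψ` fails at positions `j` and `n + j`.
-/

/-- The class string of a data value `d` in a 2-data word with transducer
output `s` and data assignments `d₁, d₂`: each position is marked by whether it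
carries `d` on the first and on the second attribute. -/
def classString {Γ : Type*} [Inhabited Γ] (s : List Γ) (d₁ d₂ : ℕ → ℤ) (d : ℤ) :
    List (Γ × Bool × Bool) :=
  (List.range s.length).map fun i =>
    (s.getD i default, decide (d₁ i = d), decide (d₂ i = d))

/-- Acceptance of a 2-data word `(w, d₁, d₂)` by a class automaton with
transducer language `Tlang` (over the product alphabet) and class condition
`α⁻¹ F`: some letter-to-letter transducer output `s` is such that for every
data value, the class string belongs to the class condition. -/
def Accepts2 {A Γ S : Type*} [Inhabited Γ] (Tlang : Set (List (A × Γ)))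
    (α : List (Γ × Bool × Bool) → S) (F : Set S)
    (w : List A) (d₁ d₂ : ℕ → ℤ) : Prop :=
  ∃ s : List Γ, s.length = w.length ∧ w.zip s ∈ Tlang ∧
    ∀ d : ℤ, α (classString s d₁ d₂ d) ∈ F

/-- The 2-data word `(w, d₁, d₂)` satisfies
`ψ = ∀x∀y (d₁(x)=d₁(y) ↔ d₂(x)=d₂(y))`. -/
def SatPsi {A : Type*} (w : List A) (d₁ d₂ : ℕ → ℤ) : Prop :=
  ∀ x < w.length, ∀ y < w.length, (d₁ x = d₁ y ↔ d₂ x = d₂ y)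

section MarkWord

variable {Γ : Type*} [Inhabited Γ]

def markWord (s : List Γ) (m : ℕ → Bool × Bool) : List (Γ × Bool × Bool) :=
  (List.range s.length).map fun t => (s.getD t default, m t)

def pointMark (a : ℕ) : ℕ → Bool × Bool := fun t => (decide (t = a), false)

lemma classString_eq_markWord (s : List Γ) (d₁ d₂ : ℕ → ℤ) (d : ℤ) :
    classString s d₁ d₂ d = markWord s fun t => (decide (d₁ t = d), decide (d₂ t = d)) :=
  rfl

lemma markWord_congr {s : List Γ} {m m' : ℕ → Bool × Bool}
    (h : ∀ t < s.length, m t = m' t) : markWord s m = markWord s m' :=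
  List.map_congr_left fun t ht => by rw [h t (List.mem_range.1 ht)]

lemma markWord_append (u v : List Γ) (m : ℕ → Bool × Bool) :
    markWord (u ++ v) m = markWord u m ++ markWord v fun t => m (u.length + t) := by
  simp only [markWord, List.length_append, List.range_add, List.map_append, List.map_map]
  congr 1
  · refine List.map_congr_left fun t ht => ?_
    rw [List.getD_append _ _ _ _ (List.mem_range.1 ht)]
  · refine List.map_congr_left fun t _ => ?_
    rw [Function.comp_apply, List.getD_append_right _ _ _ _ (Nat.le_add_right _ _),
      Nat.add_sub_cancel_left]

lemma map_markWord_append_of_pair {S : Type*} [Mul S] {α : List (Γ × Bool × Bool) → S}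
    (hhom : ∀ u v, α (u ++ v) = α u * α v) {u v : List Γ} {m : ℕ → Bool × Bool}
    {a c : ℕ} (ha : a < u.length)
    (hm : ∀ t < u.length + v.length, m t = (decide (t = a ∨ t = u.length + c), false)) :
    α (markWord (u ++ v) m) = α (markWord u (pointMark a)) * α (markWord v (pointMark c)) := by
  rw [markWord_append, hhom]
  congr 2
  · refine markWord_congr fun t ht => ?_
    rw [hm t (by omega), pointMark]
    congr 2
    exact propext (by omega)
  · refine markWord_congr fun t ht => ?_
    rw [hm _ (by omega), pointMark]
    congr 2
    exact propext (by omega)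

end MarkWord

lemma satPsi_neg {A : Type*} (w : List A) (f : ℕ → ℤ) : SatPsi w f fun x => -f x :=
  fun _ _ _ _ => neg_inj.symm

def twinData (n x : ℕ) : ℤ := if x < n then x + 1 else (x : ℤ) - n + 1

section TwinData

variable {n i j k x : ℕ}

lemma twinData_pos : 0 < twinData n x := by
  unfold twinData; split_ifs <;> omega

lemma twinData_swap_eq_iff (hi : i < n) (hj : j < n) (hk : k < n) (hx : x < 2 * n) :
    twinData n (Equiv.swap i j x) = k + 1 ↔ x = Equiv.swap i j k ∨ x = n + k := by
  simp only [twinData, Equiv.swap_apply_def]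
  split_ifs <;> omega

lemma twinData_swap_eq_iff_of_ne {d : ℤ} (hi : i < n) (hj : j < n)
    (hdi : d ≠ i + 1) (hdj : d ≠ j + 1) :
    twinData n (Equiv.swap i j x) = d ↔ twinData n x = d := by
  simp only [twinData, Equiv.swap_apply_def]
  split_ifs <;> omega

end TwinData

section TwinClasses

variable {Γ S : Type*} [Inhabited Γ] [Mul S] {α : List (Γ × Bool × Bool) → S}
  {s : List Γ} {n : ℕ}

lemma map_classString_twinData_swap (hhom : ∀ u v, α (u ++ v) = α u * α v)
    (hs : s.length = 2 * n) {i j k : ℕ} (hi : i < n) (hj : j < n) (hk : k < n) :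
    α (classString s (fun x => twinData n (Equiv.swap i j x)) (fun x => -twinData n x) (k + 1))
      = α (markWord (s.take n) (pointMark (Equiv.swap i j k)))
        * α (markWord (s.drop n) (pointMark k)) := by
  have hn : (s.take n).length = n := by simp [hs]; omega
  rw [classString_eq_markWord]
  conv_lhs => rw [← List.take_append_drop n s]
  refine map_markWord_append_of_pair hhom ?_ fun t ht => ?_
  · rw [hn, Equiv.swap_apply_def]; split_ifs <;> omega
  · rw [← List.length_append, List.take_append_drop, hs] at ht
    have hpos : 0 < twinData n t := twinData_pos
    simp only [hn, twinData_swap_eq_iff hi hj hk ht, Prod.mk.injEq, true_and,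
      decide_eq_false_iff_not]
    omega

lemma map_classString_twinData (hhom : ∀ u v, α (u ++ v) = α u * α v)
    (hs : s.length = 2 * n) {k : ℕ} (hk : k < n) :
    α (classString s (twinData n) (fun x => -twinData n x) (k + 1))
      = α (markWord (s.take n) (pointMark k)) * α (markWord (s.drop n) (pointMark k)) := by
  simpa using map_classString_twinData_swap hhom hs hk hk hk

end TwinClasses

/-- No class automaton over 2-data words recognizes `ψ`: for every work
alphabet `Γ`, letter-to-letter transducer, and class condition recognized by a
morphism `α` into a finite monoid `S`, there is a 2-data word satisfying `ψ`
which the automaton accepts only if it also accepts some 2-data word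
violating `ψ`. -/
theorem stmt12 {A Γ S : Type*} [Inhabited A] [Inhabited Γ] [Fintype S] [Monoid S]
    (Tlang : Set (List (A × Γ)))
    (α : List (Γ × Bool × Bool) → S)
    (hhom : ∀ u v, α (u ++ v) = α u * α v)
    (F : Set S) :
    ∃ (w : List A) (d₁ d₂ : ℕ → ℤ),
      SatPsi w d₁ d₂ ∧
      (Accepts2 Tlang α F w d₁ d₂ →
        ∃ (w' : List A) (d₁' d₂' : ℕ → ℤ),
          ¬ SatPsi w' d₁' d₂' ∧ Accepts2 Tlang α F w' d₁' d₂') := by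
  set n := Fintype.card S + 1
  set w : List A := List.replicate (2 * n) default
  refine ⟨w, twinData n, fun x => -twinData n x, satPsi_neg w _, ?_⟩
  rintro ⟨s, hs, hzip, hacc⟩
  have hslen : s.length = 2 * n := by simpa [w] using hs
  set L : ℕ → S := fun a => α (markWord (s.take n) (pointMark a))
  obtain ⟨⟨i, hi⟩, ⟨j, hj⟩, hij, hL⟩ :=
    Fintype.exists_ne_map_eq_of_card_lt (fun k : Fin n => L k) (by simp [n])
  have hLswap (k : ℕ) : L (Equiv.swap i j k) = L k := by
    rw [Equiv.swap_apply_def]; split_ifs <;> simp_all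
  have hclass (d : ℤ) :
      α (classString s (fun x => twinData n (Equiv.swap i j x)) (fun x => -twinData n x) d)
        = α (classString s (twinData n) (fun x => -twinData n x) d) := by
    by_cases hd : ∃ k < n, d = k + 1
    · obtain ⟨k, hk, rfl⟩ := hd
      rw [map_classString_twinData_swap hhom hslen hi hj hk,
        map_classString_twinData hhom hslen hk]
      exact congrArg (· * _) (hLswap k)
    · push Not at hd
      simp only [classString, twinData_swap_eq_iff_of_ne hi hj (hd i hi) (hd j hj)]
  refine ⟨w, fun x => twinData n (Equiv.swap i j x), fun x => -twinData n x, fun hψ => ?_,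
    s, hs, hzip, fun d => hclass d ▸ hacc d⟩
  have hij' : i ≠ j := fun h => hij (Fin.ext h)
  have h := (hψ j (by simp [w]; omega) (n + j) (by simp [w]; omega)).2
    (by simp only [twinData]; split_ifs <;> omega)
  simp only [twinData, Equiv.swap_apply_def] at h
  split_ifs at h <;> omega
end

section
/- Let A be a deterministic finite word automaton with state set Q reading paths from tree nodes toward the root of a finite tree t. For each node x in a set X, let r_x be the run of A on the label sequence of the upward path starting at x and ending at some designated node f(x) ≥root-side (an ancestor-path target). If two runs r_x and r_{x'} assign the same state of A to a common node z of t, then from z onward the runs coincide, and in particular x and x' can be directed to the same target via a shared guide. Consequently, there is a guidance system with at most |Q| colors inducing a function that maps each x ∈ X to some valid target node, where validity of a target y for x means the run of A on the path from x to y is accepting. -/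
/-- A deterministic finite automaton with state set `Fin k`. -/
structure DFA' (A : Type*) where
  k : ℕ
  δ : Fin k → A → Fin k
  q0 : Fin k
  F : Set (Fin k)

/-- Word of labels on the upward path from node `x` to its ancestor `z`
(inclusive), read from `x` towards the root. -/
def upWord {A : Type*} (ℓ : List Bool → A) (x z : List Bool) : List A :=
  (List.range (x.length - z.length + 1)).map fun i => ℓ (x.take (x.length - i))

/-- The state of the run of `M` started in `q0` at `x`, after reading the
upward path from `x` to `z`. -/
def stateAt {A : Type*} (M : DFA' A) (ℓ : List Bool → A) (x z : List Bool) : Fin M.k :=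
  (upWord ℓ x z).foldl M.δ M.q0

/-- `y` is a valid target for `x`: `y` is an ancestor of `x` and the run of
`M` on the upward path from `x` to `y` is accepting. -/
def ValidTarget {A : Type*} (M : DFA' A) (ℓ : List Bool → A) (x y : List Bool) : Prop :=
  y <+: x ∧ stateAt M ℓ x y ∈ M.F


/-! Send each node to its valid target nearest the root, and bundle the nodes into guides
according to their target and the state of their run there. Runs in the same state at a
common node coincide above it, so they choose the same target and reach it in the same state:
at every node the guides passing through it are told apart by the state there, so at most
`|Q|` of them pass through any node. Guide supports are subtrees hanging from their targets,
so colouring the guides greedily, in order of the depth of their targets, never needs more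
colours than the number of guides through a single node. -/

lemma lcp_eq_of_prefix : ∀ {y x : List Bool}, y <+: x → lcp x y = y
  | [], x, _ => by cases x <;> rfl
  | b :: bs, _, ⟨t, rfl⟩ => by
    simp [lcp, lcp_eq_of_prefix (x := bs ++ t) ⟨t, rfl⟩]

lemma BConflict.symm {π π' : BGuide} (h : BConflict π π') : BConflict π' π := by
  rwa [BConflict, Set.inter_comm]

namespace BGuide

theorem ext {π π' : BGuide} (hs : π.sources = π'.sources) (ht : π.target = π'.target) :
    π = π' := by
  cases π; cases π'; cases hs; cases ht; rfl

def IsDownward (π : BGuide) : Prop := ∀ s ∈ π.sources, π.target <+: s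

lemma IsDownward.mem_support_iff {π : BGuide} (hπ : π.IsDownward) {w : List Bool} :
    w ∈ π.support ↔ π.target <+: w ∧ ∃ s ∈ π.sources, w <+: s := by
  constructor
  · rintro ⟨s, hs, hlcp, hws | hwt⟩
    · exact ⟨lcp_eq_of_prefix (hπ s hs) ▸ hlcp, s, hs, hws⟩
    · exact ⟨lcp_eq_of_prefix (hπ s hs) ▸ hlcp, s, hs, hwt.trans (hπ s hs)⟩
  · rintro ⟨htw, s, hs, hws⟩
    exact ⟨s, hs, (lcp_eq_of_prefix (hπ s hs)).symm ▸ htw, Or.inl hws⟩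

lemma IsDownward.target_mem_support {π : BGuide} (hπ : π.IsDownward) : π.target ∈ π.support :=
  let ⟨s, hs⟩ := π.nonempty
  hπ.mem_support_iff.2 ⟨List.prefix_refl _, s, hs, hπ s hs⟩

lemma target_mem_support_of_conflict {π π' : BGuide} (hπ : π.IsDownward) (hπ' : π'.IsDownward)
    (h : BConflict π' π) (hle : π'.target.length ≤ π.target.length) :
    π.target ∈ π'.support := by
  obtain ⟨w, hw', hw⟩ := h
  obtain ⟨htw', s', hs', hws'⟩ := hπ'.mem_support_iff.1 hw'
  have htw := (hπ.mem_support_iff.1 hw).1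
  exact hπ'.mem_support_iff.2
    ⟨List.prefix_of_prefix_length_le htw' htw hle, s', hs', htw.trans hws'⟩

def Precedes (π' π : BGuide) : Prop :=
  Prod.Lex (· < ·) WellOrderingRel (π'.target.length, π') (π.target.length, π)

lemma wellFounded_precedes : WellFounded Precedes :=
  InvImage.wf _ (wellFounded_lt.prod_lex WellOrderingRel.isWellOrder.wf)

lemma Precedes.length_le {π' π : BGuide} (h : π'.Precedes π) :
    π'.target.length ≤ π.target.length := by
  rcases Prod.lex_def.1 h with h | ⟨h, -⟩ <;> exact h.le

lemma Precedes.ne {π' π : BGuide} (h : π'.Precedes π) : π' ≠ π := by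
  rintro rfl
  exact wellFounded_precedes.irrefl.irrefl _ h

lemma precedes_or_precedes_of_ne {π π' : BGuide} (h : π ≠ π') :
    π.Precedes π' ∨ π'.Precedes π := by
  simp only [Precedes, Prod.lex_def]
  rcases lt_trichotomy π.target.length π'.target.length with hl | hl | hl
  · exact Or.inl (Or.inl hl)
  · rcases trichotomous_of WellOrderingRel π π' with hr | rfl | hr
    · exact Or.inl (Or.inr ⟨hl, hr⟩)
    · exact absurd rfl h
    · exact Or.inr (Or.inr ⟨hl.symm, hr⟩)
  · exact Or.inr (Or.inl hl)

end BGuide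

open BGuide

def freeColors (G : Set BGuide) (c : BGuide → ℕ) (π : BGuide) : Set ℕ :=
  {n | ∀ π', π'.Precedes π → π' ∈ G → BConflict π' π → c π' ≠ n}

noncomputable def greedyColoring (G : Set BGuide) : BGuide → ℕ :=
  wellFounded_precedes.fix fun π c =>
    sInf {n | ∀ π' (h : π'.Precedes π), π' ∈ G → BConflict π' π → c π' h ≠ n}

lemma greedyColoring_eq (G : Set BGuide) (π : BGuide) :
    greedyColoring G π = sInf (freeColors G (greedyColoring G) π) :=
  wellFounded_precedes.fix_eq _ π

section GreedyColoring

variable {G : Set BGuide} {k : ℕ} (hG : ∀ π ∈ G, π.IsDownward)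
  (hk : ∀ w, {π ∈ G | w ∈ π.support}.encard ≤ k)
include hG hk

/-- The earlier guides conflicting with `π` all pass through the target of `π`, so together
with `π` there are at most `k` of them. -/
lemma exists_lt_mem_freeColors {π : BGuide} (hπ : π ∈ G) :
    ∃ n < k, n ∈ freeColors G (greedyColoring G) π := by
  set S := {π' | π'.Precedes π ∧ π' ∈ G ∧ BConflict π' π}
  have hS : S ⊆ {π' ∈ G | π.target ∈ π'.support} \ {π} := fun π' ⟨hp, hπ'G, hc⟩ =>
    ⟨⟨hπ'G, target_mem_support_of_conflict (hG π hπ) (hG π' hπ'G) hc hp.length_le⟩, hp.ne⟩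
  have hSk : S.encard + 1 ≤ k := by
    calc S.encard + 1 ≤ ({π' ∈ G | π.target ∈ π'.support} \ {π}).encard + 1 := by
          gcongr
      _ = {π' ∈ G | π.target ∈ π'.support}.encard :=
          Set.encard_sdiff_singleton_add_one ⟨hπ, (hG π hπ).target_mem_support⟩
      _ ≤ k := hk _
  by_contra! hall
  have hsub : {n | n < k} ⊆ greedyColoring G '' S := fun n hn =>
    have ⟨π', hp, hπ'G, hc, he⟩ : ∃ π', π'.Precedes π ∧ π' ∈ G ∧ BConflict π' π ∧
        greedyColoring G π' = n := by simpa [freeColors] using hall n hn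
    ⟨π', ⟨hp, hπ'G, hc⟩, he⟩
  have : (k : ℕ∞) + 1 ≤ k := by
    calc (k : ℕ∞) + 1 = {n | n < k}.encard + 1 := by rw [Set.Nat.encard_range]
      _ ≤ S.encard + 1 := by
          gcongr
          exact (Set.encard_le_encard hsub).trans (Set.encard_image_le _ _)
      _ ≤ k := hSk
  norm_cast at this
  omega

lemma greedyColoring_spec {π : BGuide} (hπ : π ∈ G) :
    greedyColoring G π < k ∧
      ∀ π', π'.Precedes π → π' ∈ G → BConflict π' π →
        greedyColoring G π' ≠ greedyColoring G π := by
  obtain ⟨n, hnk, hn⟩ := exists_lt_mem_freeColors hG hk hπ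
  have hle : greedyColoring G π ≤ n := greedyColoring_eq G π ▸ Nat.sInf_le hn
  exact ⟨hle.trans_lt hnk, greedyColoring_eq G π ▸ Nat.sInf_mem ⟨n, hn⟩⟩

theorem exists_coloring_of_encard_le :
    ∃ c : BGuide → ℕ, (∀ π ∈ G, c π < k) ∧
      ∀ π ∈ G, ∀ π' ∈ G, π ≠ π' → BConflict π π' → c π ≠ c π' := by
  refine ⟨greedyColoring G, fun π hπ => (greedyColoring_spec hG hk hπ).1, ?_⟩
  intro π hπ π' hπ' hne hc
  rcases precedes_or_precedes_of_ne hne with hp | hp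
  · exact (greedyColoring_spec hG hk hπ').2 π hp hπ hc
  · exact ((greedyColoring_spec hG hk hπ).2 π' hp hπ' hc.symm).symm

end GreedyColoring

section Automaton

variable {A : Type*} (M : DFA' A) (ℓ : List Bool → A)

lemma upWord_eq_append_tail {w z x : List Bool} (hwz : w <+: z) (hzx : z <+: x) :
    upWord ℓ x w = upWord ℓ x z ++ (upWord ℓ z w).tail := by
  have hw := hwz.length_le
  have hz := hzx.length_le
  rw [upWord, upWord, upWord, List.range_succ_eq_map (n := z.length - w.length),
    List.map_cons, List.tail_cons, List.map_map,
    show x.length - w.length + 1 = (x.length - z.length + 1) + (z.length - w.length) by omega,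
    List.range_add, List.map_append, List.map_map]
  congr 1
  refine List.map_congr_left fun j hj => ?_
  obtain ⟨t, rfl⟩ := hzx
  rw [List.mem_range] at hj
  simp only [Function.comp_apply, List.length_append] at hz ⊢
  rw [List.take_append_of_le_length (by omega)]
  congr 2
  omega

lemma stateAt_eq_foldl_tail {w z x : List Bool} (hwz : w <+: z) (hzx : z <+: x) :
    stateAt M ℓ x w = (upWord ℓ z w).tail.foldl M.δ (stateAt M ℓ x z) := by
  rw [stateAt, upWord_eq_append_tail ℓ hwz hzx, List.foldl_append, stateAt]

theorem stateAt_eq_of_stateAt_eq {x x' z w : List Bool} (hzx : z <+: x) (hzx' : z <+: x')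
    (h : stateAt M ℓ x z = stateAt M ℓ x' z) (hwz : w <+: z) :
    stateAt M ℓ x w = stateAt M ℓ x' w := by
  rw [stateAt_eq_foldl_tail M ℓ hwz hzx, stateAt_eq_foldl_tail M ℓ hwz hzx', h]

lemma exists_validTarget_take {x : List Bool} (h : ∃ y, ValidTarget M ℓ x y) :
    ∃ m, ValidTarget M ℓ x (x.take m) :=
  let ⟨y, hy⟩ := h
  ⟨y.length, List.prefix_iff_eq_take.1 hy.1 ▸ hy⟩

open Classical in
/-- The valid target nearest the root; the junk value `x` when `x` has no valid target. -/
noncomputable def topTarget (x : List Bool) : List Bool :=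
  if h : ∃ m, ValidTarget M ℓ x (x.take m) then x.take (Nat.find h) else x

open Classical in
lemma validTarget_topTarget {x : List Bool} (h : ∃ y, ValidTarget M ℓ x y) :
    ValidTarget M ℓ x (topTarget M ℓ x) := by
  have hm := exists_validTarget_take M ℓ h
  rw [topTarget, dif_pos hm]
  exact Nat.find_spec hm

open Classical in
lemma length_topTarget_le {x y : List Bool} (hy : ValidTarget M ℓ x y) :
    (topTarget M ℓ x).length ≤ y.length := by
  have hm := exists_validTarget_take M ℓ ⟨y, hy⟩
  rw [topTarget, dif_pos hm, List.length_take]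
  exact (min_le_left _ _).trans
    (Nat.find_min' hm (List.prefix_iff_eq_take.1 hy.1 ▸ hy : ValidTarget M ℓ x (x.take y.length)))

lemma length_topTarget_le_of_stateAt_eq {x x' u : List Bool} (hx : ∃ y, ValidTarget M ℓ x y)
    (hu : u <+: x) (hu' : u <+: x') (hxu : topTarget M ℓ x <+: u)
    (h : stateAt M ℓ x u = stateAt M ℓ x' u) :
    (topTarget M ℓ x').length ≤ (topTarget M ℓ x).length :=
  length_topTarget_le M ℓ ⟨hxu.trans hu',
    stateAt_eq_of_stateAt_eq M ℓ hu hu' h hxu ▸ (validTarget_topTarget M ℓ hx).2⟩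

lemma topTarget_eq_of_stateAt_eq {x x' u : List Bool} (hx : ∃ y, ValidTarget M ℓ x y)
    (hx' : ∃ y, ValidTarget M ℓ x' y) (hu : u <+: x) (hu' : u <+: x')
    (hxu : topTarget M ℓ x <+: u) (hxu' : topTarget M ℓ x' <+: u)
    (h : stateAt M ℓ x u = stateAt M ℓ x' u) :
    topTarget M ℓ x = topTarget M ℓ x' := by
  have hle := length_topTarget_le_of_stateAt_eq M ℓ hx' hu' hu hxu' h.symm
  exact (List.prefix_of_prefix_length_le hxu hxu' hle).eq_of_length
    (hle.antisymm (length_topTarget_le_of_stateAt_eq M ℓ hx hu hu' hxu h))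

variable (X : Set (List Bool))

def stateGuideSources (y : List Bool) (q : Fin M.k) : Set (List Bool) :=
  {x ∈ X | topTarget M ℓ x = y ∧ stateAt M ℓ x y = q}

def stateGuides : Set BGuide :=
  {π | ∃ q, π.sources = stateGuideSources M ℓ X π.target q}

variable {X} (hX : ∀ x ∈ X, ∃ y, ValidTarget M ℓ x y)
include hX

lemma isDownward_of_mem_stateGuides {π : BGuide} (hπ : π ∈ stateGuides M ℓ X) :
    π.IsDownward := by
  intro s hs
  obtain ⟨q, hq⟩ := hπ
  obtain ⟨hsX, hst, -⟩ := hq ▸ hs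
  exact hst ▸ (validTarget_topTarget M ℓ (hX s hsX)).1

lemma eq_of_stateAt_eq_of_mem_stateGuides {π π' : BGuide} (hπ : π ∈ stateGuides M ℓ X)
    (hπ' : π' ∈ stateGuides M ℓ X) {w s s' : List Bool} (hs : s ∈ π.sources)
    (hs' : s' ∈ π'.sources) (hws : w <+: s) (hws' : w <+: s') (htw : π.target <+: w)
    (htw' : π'.target <+: w) (h : stateAt M ℓ s w = stateAt M ℓ s' w) : π = π' := by
  obtain ⟨q, hq⟩ := hπ
  obtain ⟨q', hq'⟩ := hπ'
  obtain ⟨hsX, hst, hsq⟩ := hq ▸ hs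
  obtain ⟨hsX', hst', hsq'⟩ := hq' ▸ hs'
  have ht : π.target = π'.target := by
    rw [← hst, ← hst']
    exact topTarget_eq_of_stateAt_eq M ℓ (hX s hsX) (hX s' hsX') hws hws' (hst ▸ htw)
      (hst' ▸ htw') h
  have hqq : q = q' := by
    rw [← hsq, ← hsq', ← ht]
    exact stateAt_eq_of_stateAt_eq M ℓ hws hws' h htw
  exact BGuide.ext (by rw [hq, hq', ht, hqq]) ht

/-- Guides through a common node are distinguished by the state there of any of their
sources passing through it. -/
lemma encard_stateGuides_through_le (w : List Bool) :
    {π ∈ stateGuides M ℓ X | w ∈ π.support}.encard ≤ M.k := by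
  have hsrc : ∀ π ∈ {π ∈ stateGuides M ℓ X | w ∈ π.support},
      ∃ s ∈ π.sources, w <+: s ∧ π.target <+: w := fun π ⟨hπ, hw⟩ =>
    let ⟨htw, s, hs, hws⟩ := (isDownward_of_mem_stateGuides M ℓ hX hπ).mem_support_iff.1 hw
    ⟨s, hs, hws, htw⟩
  choose! src hsrc hws htw using hsrc
  calc _ ≤ (Set.univ : Set (Fin M.k)).encard := by
        refine Set.encard_le_encard_of_injOn (f := fun π => stateAt M ℓ (src π) w)
          (Set.mapsTo_univ _ _) fun π hπ π' hπ' h => ?_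
        exact eq_of_stateAt_eq_of_mem_stateGuides M ℓ hX hπ.1 hπ'.1 (hsrc π hπ) (hsrc π' hπ')
          (hws π hπ) (hws π' hπ') (htw π hπ) (htw π' hπ') h
    _ = M.k := by simp [Set.encard_univ]

end Automaton

/-- (a) Two upward runs that agree at a common node agree on the remaining
common path; (b) consequently, whenever every node of `X` has a valid target,
there is a guidance system with at most `|Q|` colors inducing a function that
maps each `x ∈ X` to some valid target. -/
theorem stmt17 {A : Type*} (M : DFA' A) (ℓ : List Bool → A) :
    (∀ x x' z, z <+: x → z <+: x' → stateAt M ℓ x z = stateAt M ℓ x' z →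
      ∀ w, w <+: z → stateAt M ℓ x w = stateAt M ℓ x' w) ∧
    (∀ X : Set (List Bool), (∀ x ∈ X, ∃ y, ValidTarget M ℓ x y) →
      ∃ (wf : List Bool → List Bool) (GS : Set BGuide) (c : BGuide → ℕ),
        (∀ x ∈ X, ValidTarget M ℓ x (wf x)) ∧
        (∀ x ∈ X, ∃ π ∈ GS, x ∈ π.sources ∧ π.target = wf x) ∧
        (∀ π ∈ GS, c π < M.k) ∧
        (∀ π ∈ GS, ∀ π' ∈ GS, π ≠ π' → BConflict π π' → c π ≠ c π')) := by
  refine ⟨fun x x' z hzx hzx' h w hwz => stateAt_eq_of_stateAt_eq M ℓ hzx hzx' h hwz,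
    fun X hX => ?_⟩
  obtain ⟨c, hc_lt, hc_ne⟩ := exists_coloring_of_encard_le
    (fun _ => isDownward_of_mem_stateGuides M ℓ hX) (encard_stateGuides_through_le M ℓ hX)
  refine ⟨topTarget M ℓ, stateGuides M ℓ X, c, fun x hx => validTarget_topTarget M ℓ (hX x hx),
    fun x hx => ?_, hc_lt, hc_ne⟩
  set y := topTarget M ℓ x
  exact ⟨⟨stateGuideSources M ℓ X y (stateAt M ℓ x y), ⟨x, hx, rfl, rfl⟩, y⟩, ⟨_, rfl⟩,
    ⟨hx, rfl, rfl⟩, rfl⟩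
end
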